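/- Every torsionless FI-module V generated in degree 0 over a commutative Noetherian ring satisfies V ≅ ΣV via the natural map, hence V_0 ≅ V_1 ≅ V_2 ≅ ⋯ and V ≅ ℂ̃ ⊗_{k} V_0 (i.e., V is the 'constant' FI-module on V_0); in particular V is ♯-filtered. -/

import Mathlib

open CategoryTheory CategoryTheory.Limits

def FI : Type := ℕ
def FI.of : ℕ → FI := id
def FI.n : FI → ℕ := id
instance : Category FI where
  Hom m n := Fin m.n ↪ Fin n.n
  id _ := Function.Embedding.refl _
  comp f g := f.trans g
  id_comp _ := rfl
  comp_id _ := rfl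
  assoc _ _ _ := rfl
abbrev FIMod (k : Type) [CommRing k] := FI ⥤ ModuleCat.{0} k

/-- Extension of an injection `[m] → [n]` to `[m+1] → [n+1]` fixing the new first point. -/
def extEmb {m n : ℕ} (f : Fin m ↪ Fin n) : Fin (m + 1) ↪ Fin (n + 1) :=
  ⟨fun x => Fin.cases 0 (fun r => (f r).succ) x, by
    intro a b h
    induction a using Fin.cases with
    | zero =>
      induction b using Fin.cases with
      | zero => rfl
      | succ j => simp at h; exact absurd h.symm (Fin.succ_ne_zero _)
    | succ i =>
      induction b using Fin.cases with
      | zero => simp at h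
      | succ j =>
        simp only [Fin.cases_succ] at h
        exact congrArg Fin.succ (f.injective (Fin.succ_injective _ h))⟩

@[simp] lemma extEmb_zero {m n : ℕ} (f : Fin m ↪ Fin n) : extEmb f 0 = 0 := rfl
@[simp] lemma extEmb_succ {m n : ℕ} (f : Fin m ↪ Fin n) (r : Fin m) :
    extEmb f r.succ = (f r).succ := by
  show Fin.cases (motive := fun _ => Fin (n + 1)) 0 (fun r => (f r).succ) r.succ = _
  simp only [Fin.cases_succ]

/-- Extensionality for morphisms in `FI`. -/
lemma FI.hom_ext {m n : FI} {f g : Fin m.n ↪ Fin n.n} (h : ∀ x, f x = g x) :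
    f = g := DFunLike.ext f g h

/-- The self-embedding `ι : FI → FI`, `[n] ↦ [n+1]`. -/
def iota : FI ⥤ FI where
  obj n := FI.of (n.n + 1)
  map f := extEmb f
  map_id n := by
    refine FI.hom_ext fun x => ?_
    induction x using Fin.cases <;> rfl
  map_comp {a b c} f g := by
    refine FI.hom_ext fun x => ?_
    induction x using Fin.cases with
    | zero => rfl
    | succ i =>
      show extEmb (f.trans g) i.succ = extEmb g (extEmb f i.succ)
      simp

variable (k : Type) [CommRing k]

/-- The shift functor `Σ` on `FI`-modules. -/
def shiftF : FIMod k ⥤ FIMod k := (Functor.whiskeringLeft FI FI (ModuleCat k)).obj iota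

/-- The natural transformation `Id → ι` given by the inclusions `[n] ↪ [n+1]`, `r ↦ r+1`. -/
def piTrans : 𝟭 FI ⟶ iota where
  app n := ⟨Fin.succ, Fin.succ_injective _⟩
  naturality m n f := by
    refine FI.hom_ext fun x => ?_
    exact (extEmb_succ (m := m.n) (n := n.n) f x).symm

/-- The natural map `V → ΣV`. -/
def toShift (V : FIMod k) : V ⟶ (shiftF k).obj V :=
  V.leftUnitor.inv ≫ Functor.whiskerRight piTrans V

/-- `V → ΣV` as a natural transformation of endofunctors. -/
def natToShift : 𝟭 (FIMod k) ⟶ shiftF k where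
  app V := toShift k V
  naturality V W φ := by
    ext n
    simp only [Functor.id_obj, Functor.id_map, toShift, shiftF, Functor.whiskeringLeft_obj_obj,
      Functor.comp_obj, Category.assoc, NatTrans.comp_app, Functor.leftUnitor_inv_app,
      Functor.whiskerRight_app, Functor.whiskeringLeft_obj_map, Functor.whiskerLeft_app, Category.id_comp]
    rename_i x
    exact congrArg (fun g => ModuleCat.Hom.hom g x) (φ.naturality (piTrans.app n)).symm

/-- The derivative `DV`, the cokernel of `V → ΣV`. -/
noncomputable def Dobj (V : FIMod k) : FIMod k := cokernel (toShift k V)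

/-- The derivative functor `D`. -/
noncomputable def Dfun : FIMod k ⥤ FIMod k where
  obj V := Dobj k V
  map {V W} φ := cokernel.map _ _ φ ((shiftF k).map φ) ((natToShift k).naturality φ).symm
  map_id V := by
    apply coequalizer.hom_ext
    simp [Dobj]
  map_comp {U V W} φ ψ := by
    apply coequalizer.hom_ext
    simp [Dobj]

variable (k : Type) [CommRing k]

/-- An `FI`-submodule of an `FI`-module. -/
structure FISub {k : Type} [CommRing k] (V : FIMod k) where
  sub : ∀ n : FI, Submodule k (V.obj n)
  map_mem : ∀ {m n : FI} (f : m ⟶ n) (v : V.obj m), v ∈ sub m → (V.map f) v ∈ sub n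

/-- `V` is generated in degrees `≤ N`. -/
def GeneratedIn {k : Type} [CommRing k] (V : FIMod k) (N : ℕ) : Prop :=
  ∀ W : FISub V, (∀ i : ℕ, i ≤ N → ∀ v : V.obj (FI.of i), v ∈ W.sub (FI.of i)) →
    ∀ (n : FI) (v : V.obj n), v ∈ W.sub n

/-- `V` is a finitely generated `FI`-module. -/
def FG {k : Type} [CommRing k] (V : FIMod k) : Prop :=
  ∃ S : Finset ((n : ℕ) × V.obj (FI.of n)),
    ∀ W : FISub V, (∀ s ∈ S, s.2 ∈ W.sub (FI.of s.1)) → ∀ (n : FI) (v : V.obj n), v ∈ W.sub n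

/-- `V` is torsionless: no nonzero element is killed by an injection. -/
def Torsionless {k : Type} [CommRing k] (V : FIMod k) : Prop :=
  ∀ (i : ℕ) (v : V.obj (FI.of i)), v ≠ 0 →
    ∀ α : FI.of i ⟶ FI.of (i + 1), (V.map α) v ≠ 0


instance (k : Type) [CommRing k] : HasFiniteBiproducts (FIMod k) :=
  Abelian.hasFiniteBiproducts

variable (k : Type) [CommRing k]

/-- The free (representable) `FI`-module `M(i)`, the linearization of `FI(i,−)`. -/
noncomputable def Mrep (i : ℕ) : FIMod k where
  obj n := ModuleCat.of k ((Fin i ↪ Fin n.n) →₀ k)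
  map {m n} f := ModuleCat.ofHom (Finsupp.lmapDomain k k fun (e : Fin i ↪ Fin m.n) => e.trans f)
  map_id n := by
    have : (fun e : Fin i ↪ Fin n.n => e.trans (𝟙 n)) = id := by
      funext e; ext x; rfl
    show ModuleCat.ofHom (Finsupp.lmapDomain k k _) = _
    rw [this, Finsupp.lmapDomain_id]
    rfl
  map_comp {a b c} f g := by
    show ModuleCat.ofHom (Finsupp.lmapDomain k k _) = _
    have : (fun e : Fin i ↪ Fin a.n => e.trans (f ≫ g))
        = (fun e : Fin i ↪ Fin b.n => e.trans g) ∘ (fun e => e.trans f) := by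
      funext e; ext x; rfl
    rw [this, Finsupp.lmapDomain_comp]
    rfl

lemma FI.le_of_hom {m n : FI} (f : m ⟶ n) : m.n ≤ n.n := by
  simpa using Fintype.card_le_of_embedding (f : Fin m.n ↪ Fin n.n)

/-- The submodule `(JV)_n ⊆ V_n` spanned by images from strictly lower degrees. -/
def Jsub {k : Type} [CommRing k] (V : FIMod k) (n : FI) : Submodule k (V.obj n) :=
  ⨆ (m : FI) (_ : m.n < n.n) (f : m ⟶ n), LinearMap.range (V.map f).hom

lemma Jsub_le_comap {k : Type} [CommRing k] (V : FIMod k) {m n : FI} (f : m ⟶ n) :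
    Jsub V m ≤ (Jsub V n).comap (V.map f).hom := by
  refine iSup_le fun m' => iSup_le fun hm' => iSup_le fun g => ?_
  rintro x ⟨y, rfl⟩
  simp only [Submodule.mem_comap]
  have h1 : (V.map f).hom ((V.map g).hom y) = (V.map (g ≫ f)).hom y := by
    rw [V.map_comp]; rfl
  rw [h1]
  have h2 : m'.n < n.n := lt_of_lt_of_le hm' (FI.le_of_hom f)
  refine Submodule.mem_iSup_of_mem m' ?_
  refine Submodule.mem_iSup_of_mem h2 ?_
  exact Submodule.mem_iSup_of_mem (g ≫ f) ⟨y, rfl⟩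

/-- The degreewise quotient `H₀(V) = V/JV` as an `FI`-module. -/
noncomputable def H0obj {k : Type} [CommRing k] (V : FIMod k) : FIMod k where
  obj n := ModuleCat.of k (V.obj n ⧸ Jsub V n)
  map {m n} f := ModuleCat.ofHom (Submodule.mapQ _ _ (V.map f).hom (Jsub_le_comap V f))
  map_id n := by
    have h : V.map (𝟙 n) = 𝟙 (V.obj n) := V.map_id n
    apply ModuleCat.hom_ext
    refine Submodule.linearMap_qext _ ?_
    ext x
    show Submodule.Quotient.mk ((V.map (𝟙 n)).hom x) = _
    rw [h]
    rfl
  map_comp {a b c} f g := by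
    have h : V.map (f ≫ g) = V.map f ≫ V.map g := V.map_comp f g
    apply ModuleCat.hom_ext
    refine Submodule.linearMap_qext _ ?_
    ext x
    show Submodule.Quotient.mk ((V.map (f ≫ g)).hom x) = _
    rw [h]
    rfl

/-- The functor `H₀ = ℂ̃₀ ⊗_{ℂ̃} − : FI-Mod → FI-Mod`. -/
noncomputable def H0Functor (k : Type) [CommRing k] : FIMod k ⥤ FIMod k where
  obj := H0obj
  map {V W} φ :=
    { app := fun n => ModuleCat.ofHom (Submodule.mapQ _ _ (φ.app n).hom (by
        refine iSup_le fun m => iSup_le fun hm => iSup_le fun g => ?_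
        rintro x ⟨y, rfl⟩
        simp only [Submodule.mem_comap]
        have h1 : (φ.app n).hom ((V.map g).hom y) = (W.map g).hom ((φ.app m).hom y) :=
          congrArg (fun h => h.hom y) (φ.naturality g)
        rw [h1]
        refine Submodule.mem_iSup_of_mem m (Submodule.mem_iSup_of_mem hm ?_)
        exact Submodule.mem_iSup_of_mem g ⟨_, rfl⟩)),
      naturality := by
        intro m n f
        apply ModuleCat.hom_ext
        refine Submodule.linearMap_qext _ ?_
        ext x
        have h : (φ.app n).hom ((V.map f).hom x) = (W.map f).hom ((φ.app m).hom x) :=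
          congrArg (fun h => h.hom x) (φ.naturality f)
        show Submodule.Quotient.mk ((φ.app n).hom ((V.map f).hom x)) = _
        rw [h]
        rfl }
  map_id V := by
    ext n : 2
    apply ModuleCat.hom_ext
    refine Submodule.linearMap_qext _ ?_
    ext x
    rfl
  map_comp {U V W} φ ψ := by
    ext n : 2
    apply ModuleCat.hom_ext
    refine Submodule.linearMap_qext _ ?_
    ext x
    rfl

instance (k : Type) [CommRing k] : (H0Functor k).Additive where
  map_add := by
    intro V W φ ψ
    ext n : 2
    apply ModuleCat.hom_ext
    refine Submodule.linearMap_qext _ ?_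
    ext x
    show Submodule.Quotient.mk ((φ.app n).hom x + (ψ.app n).hom x) =
      (((H0Functor k).map φ).app n).hom (Submodule.Quotient.mk x) +
      (((H0Functor k).map ψ).app n).hom (Submodule.Quotient.mk x)
    rw [Submodule.Quotient.mk_add]
    rfl

/-- The homology functor `H_s(−) = Tor_s^{ℂ̃}(ℂ̃₀, −)`, as the `s`-th left derived
functor of `H₀`. -/
noncomputable def Hs (k : Type) [CommRing k] [EnoughProjectives (FIMod k)] (s : ℕ) :
    FIMod k ⥤ FIMod k :=
  (H0Functor k).leftDerived s

/-- Strictly monotone injections `[i] → [n]`, a set of representatives for the orbits of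
the right action of `S_i` on `FI(i,n)`. -/
def OrdInj (i n : ℕ) : Type := {e : Fin i ↪ Fin n // StrictMono e}

noncomputable instance (i n : ℕ) : Fintype (OrdInj i n) := by
  classical
  unfold OrdInj
  infer_instance

/-- The canonical map `⊕_{e ∈ OrdInj(i,n)} V_i → V_n`, `(v_e) ↦ Σ_e e·v_e`.
It is bijective for every `n` exactly when `V` is the induced module
`ℂ̃ ⊗_{k[S_i]} V_i`. -/
noncomputable def basicMap {k : Type} [CommRing k] (V : FIMod k) (i n : ℕ) :
    (OrdInj i n → V.obj (FI.of i)) →ₗ[k] V.obj (FI.of n) :=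
  ∑ e : OrdInj i n, (V.map (e.1 : FI.of i ⟶ FI.of n)).hom.comp (LinearMap.proj e)

/-- `V` is (isomorphic to) a basic `♯`-filtered module `ℂ̃ ⊗_{k[S_i]} T` with `T = V_i`. -/
def BasicSharp {k : Type} [CommRing k] (V : FIMod k) (i : ℕ) : Prop :=
  (∀ j : ℕ, j < i → Subsingleton (V.obj (FI.of j))) ∧
    ∀ n : ℕ, Function.Bijective (basicMap V i n)

/-- `V` admits a filtration of length `m` whose successive quotients are basic
`♯`-filtered modules. -/
def SharpChain {k : Type} [CommRing k] : ℕ → FIMod k → Prop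
  | 0, V => IsZero V
  | m + 1, V => ∃ (U W : FIMod k) (f : U ⟶ V) (g : V ⟶ W) (w : f ≫ g = 0),
      (ShortComplex.mk f g w).ShortExact ∧ SharpChain m U ∧ ∃ i, BasicSharp W i

/-- `V` is a `♯`-filtered `FI`-module. -/
def SharpFiltered {k : Type} [CommRing k] (V : FIMod k) : Prop :=
  ∃ m, SharpChain m V

/-- `pdLE n M` : `M` has projective dimension `≤ n`. -/
noncomputable def pdLE {C : Type*} [Category C] [Abelian C] : ℕ → C → Prop
  | 0, M => Projective M
  | n + 1, M => ∃ (P : C) (f : P ⟶ M), Projective P ∧ Epi f ∧ pdLE n (kernel f)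

/-- The `d`-th iterated shift `Σ_d V`. -/
def shiftIter (k : Type) [CommRing k] : ℕ → FIMod k → FIMod k
  | 0, V => V
  | d + 1, V => (shiftF k).obj (shiftIter k d V)

/-- A permutation of `[i]` as a morphism in `FI`. -/
def permHom (i : ℕ) (g : Equiv.Perm (Fin i)) : FI.of i ⟶ FI.of i := g.toEmbedding

/-- The representation of the symmetric group `S_i` on `V_i` coming from the
`FI`-module structure. -/
def permRep {k : Type} [CommRing k] (V : FIMod k) (i : ℕ) :
    Representation k (Equiv.Perm (Fin i)) (V.obj (FI.of i)) where
  toFun g := (V.map (permHom i g)).hom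
  map_one' := by
    have h1 : permHom i 1 = 𝟙 (FI.of i) := rfl
    show (V.map (permHom i 1)).hom = (1 : Module.End k (V.obj (FI.of i)))
    rw [h1, V.map_id]; rfl
  map_mul' g h := by
    have h1 : permHom i (g * h) = permHom i h ≫ permHom i g := rfl
    show (V.map (permHom i (g * h))).hom = (V.map (permHom i h) ≫ V.map (permHom i g)).hom
    rw [h1, V.map_comp]

/-
If `V` is generated in degree `0`, every `V_n` is the image of `V_0` under the unique
injection `[0] → [n]`; if `V` is torsionless, these maps are injective, being composites of
maps `V_i → V_{i+1}`. So `V_0 → V_n` is an isomorphism for every `n`, which is the constancy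
of `V`, and `V_n → V_{n+1}` is then one as well.
-/

section

variable {k : Type} [CommRing k]

instance FI.uniqueHomOfZero (n : FI) : Unique (FI.of 0 ⟶ n) where
  default := ⟨Fin.elim0, fun x => x.elim0⟩
  uniq _ := FI.hom_ext fun x => x.elim0

theorem Torsionless.map_injective {V : FIMod k} (hT : Torsionless V) {i : ℕ}
    (α : FI.of i ⟶ FI.of (i + 1)) : Function.Injective (V.map α) :=
  (injective_iff_map_eq_zero (V.map α).hom).2 fun v hv => by_contra fun hv0 => hT i v hv0 α hv

theorem Torsionless.map_default_injective {V : FIMod k} (hT : Torsionless V) (m : ℕ) :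
    Function.Injective (V.map (default : FI.of 0 ⟶ FI.of m)) := by
  induction m with
  | zero =>
    rw [Subsingleton.elim default (𝟙 _), V.map_id]
    exact fun _ _ h => h
  | succ m ih =>
    have hfactor : V.map (default : FI.of 0 ⟶ FI.of (m + 1)) =
        V.map default ≫ V.map (piTrans.app (FI.of m)) := by
      rw [← V.map_comp]
      exact congrArg V.map (Subsingleton.elim _ _)
    rw [hfactor]
    exact (hT.map_injective _).comp ih

def FISub.rangeOfZero (V : FIMod k) : FISub V where
  sub n := LinearMap.range (V.map (default : FI.of 0 ⟶ n)).hom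
  map_mem f _ := by
    rintro ⟨y, rfl⟩
    refine ⟨y, ?_⟩
    rw [Subsingleton.elim default (default ≫ f), V.map_comp]
    rfl

theorem GeneratedIn.map_default_surjective {V : FIMod k} (hgen : GeneratedIn V 0) (n : FI) :
    Function.Surjective (V.map (default : FI.of 0 ⟶ n)) := by
  refine fun v => hgen (FISub.rangeOfZero V) ?_ n v
  rintro i hi w
  obtain rfl := Nat.le_zero.mp hi
  refine ⟨w, ?_⟩
  rw [Subsingleton.elim default (𝟙 _), V.map_id]
  rfl

theorem toShift_app_bijective {V : FIMod k} (hT : Torsionless V) (hgen : GeneratedIn V 0)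
    (n : FI) : Function.Bijective ((toShift k V).app n) := by
  have hshift : (toShift k V).app n = V.map (piTrans.app n) := by ext; rfl
  rw [hshift]
  refine ⟨hT.map_injective (i := n.n) _, fun v => ?_⟩
  obtain ⟨y, rfl⟩ := hgen.map_default_surjective (iota.obj n) v
  refine ⟨V.map default y, ?_⟩
  rw [Subsingleton.elim (default : FI.of 0 ⟶ iota.obj n) (default ≫ piTrans.app n), V.map_comp]
  rfl

instance OrdInj.uniqueOfZero (m : ℕ) : Unique (OrdInj 0 m) where
  default := ⟨default, fun a => a.elim0⟩
  uniq _ := Subtype.ext (Subsingleton.elim (α := FI.of 0 ⟶ FI.of m) _ _)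

theorem basicMap_zero_eq (V : FIMod k) (m : ℕ) :
    basicMap V 0 m = (V.map (default : FI.of 0 ⟶ FI.of m)).hom ∘ₗ LinearMap.proj default :=
  Fintype.sum_unique _

theorem basicMap_zero_bijective {V : FIMod k} (hT : Torsionless V) (hgen : GeneratedIn V 0)
    (m : ℕ) : Function.Bijective (basicMap V 0 m) := by
  rw [basicMap_zero_eq, LinearMap.coe_comp]
  exact Function.Bijective.comp ⟨hT.map_default_injective m, hgen.map_default_surjective _⟩
    (Equiv.funUnique _ _).bijective

open ZeroObject in
theorem SharpFiltered.of_basicSharp {V : FIMod k} {i : ℕ} (h : BasicSharp V i) :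
    SharpFiltered V :=
  ⟨1, 0, V, 0, 𝟙 V, by simp,
    { exact := (ShortComplex.exact_iff_mono _ rfl).2 inferInstance
      mono_f := ⟨fun _ _ _ => (isZero_zero _).eq_of_tgt _ _⟩ },
    isZero_zero _, i, h⟩

end

theorem stmt_15_general (k : Type) [CommRing k] (V : FIMod k)
    (hT : Torsionless V) (hgen : GeneratedIn V 0) :
    (∀ n : FI, Function.Bijective ((toShift k V).app n)) ∧
    (∀ m : ℕ, Function.Bijective (basicMap V 0 m)) ∧
    SharpFiltered V :=
  ⟨toShift_app_bijective hT hgen, basicMap_zero_bijective hT hgen,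
    SharpFiltered.of_basicSharp ⟨fun _ h => absurd h (Nat.not_lt_zero _),
      basicMap_zero_bijective hT hgen⟩⟩

/-- A torsionless finitely generated `FI`-module generated in degree `0` satisfies
`V ≅ ΣV` via the natural map, is the constant module `ℂ̃ ⊗_k V_0`, and is `♯`-filtered. -/
theorem stmt_15 (k : Type) [CommRing k] [IsNoetherianRing k] (V : FIMod k) (hFG : FG V)
    (hT : Torsionless V) (hgen : GeneratedIn V 0) :
    (∀ n : FI, Function.Bijective ((toShift k V).app n)) ∧
    (∀ m : ℕ, Function.Bijective (basicMap V 0 m)) ∧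
    SharpFiltered V :=
  stmt_15_general k V hT hgen
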